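/- Let A be an n-DPDA whose input alphabet contains a distinguished symbol ⋆, and let R be a run of A between two milestone configurations. If R reads only ⋆ symbols, then R is 0-upper. -/

import Mathlib

namespace HOPDA

/-- Iterated exponentiation `pow` from the paper:
`pow [] = 1`, `pow (m :: l) = (1 + m) ^ pow l - 1`. -/
def pow : List ℕ → ℕ
  | [] => 1
  | m :: l => (1 + m) ^ pow l - 1

/-! ### Higher-order stacks.

Stacks are represented positionlessly (nested lists of symbols); the positions of the
paper are represented by *addresses*: lists of bottom-based indices leading from the
outermost level into the stack.  Equality of contents is positionless equality `≅`. -/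

inductive St (Γ : Type) : Type where
  | leaf (γ : Γ) : St Γ
  | node (l : List (St Γ)) : St Γ

/-- `IsValid k s` : `s` is a stack of order `k` all of whose component stacks are nonempty. -/
def IsValid {Γ : Type} : ℕ → St Γ → Prop
  | 0, St.leaf _ => True
  | 0, St.node _ => False
  | _ + 1, St.leaf _ => False
  | k + 1, St.node l => l ≠ [] ∧ ∀ t ∈ l, IsValid k t

/-- The address of the topmost substack `d` levels below the surface
(indices count from the bottom of each stack, as the positions in the paper do). -/
def topAddr {Γ : Type} : St Γ → ℕ → List ℕ
  | _, 0 => []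
  | St.leaf _, _ + 1 => []
  | St.node l, d + 1 => (l.length - 1) :: topAddr (l.getLastD (St.node [])) d

/-- The substack sitting at a given address. -/
def sub? {Γ : Type} : St Γ → List ℕ → Option (St Γ)
  | s, [] => some s
  | St.leaf _, _ :: _ => none
  | St.node l, i :: p =>
      match l[i]? with
      | some t => sub? t p
      | none => none

/-- Modify the substack at a given address. -/
def modAt {Γ : Type} : St Γ → List ℕ → (St Γ → Option (St Γ)) → Option (St Γ)
  | s, [], f => f s
  | St.leaf _, _ :: _, _ => none
  | St.node l, i :: p, f =>
      match l[i]? with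
      | none => none
      | some t =>
          match modAt t p f with
          | none => none
          | some t' => some (St.node (l.set i t'))

/-- The topmost stack symbol of an order-`n` stack. -/
def topLeaf? {Γ : Type} (n : ℕ) (s : St Γ) : Option Γ :=
  match sub? s (topAddr s n) with
  | some (St.leaf γ) => some γ
  | _ => none

/-- The content of the topmost `k`-stack of an order-`n` stack (`top^k`);
equality of these contents is positionless equality `≅` of topmost `k`-stacks. -/
def topStk {Γ : Type} (n : ℕ) (s : St Γ) (k : ℕ) : Option (St Γ) :=
  sub? s (topAddr s (n - k))

/-- Number of components of the (composite) stack at the given address. -/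
def sizeAt {Γ : Type} (s : St Γ) (p : List ℕ) : ℕ :=
  match sub? s p with
  | some (St.node l) => l.length
  | _ => 0

/-- Remove the topmost component of a composite stack
(defined only when it has at least two components). -/
def popStk {Γ : Type} : St Γ → Option (St Γ)
  | St.node l => if 2 ≤ l.length then some (St.node l.dropLast) else none
  | St.leaf _ => none

/-- Duplicate the topmost `(r-1)`-stack of an `r`-stack,
replacing the topmost symbol of the new copy by `γ`. -/
def dupTop {Γ : Type} (r : ℕ) (γ : Γ) : St Γ → Option (St Γ)
  | St.node l =>
      match l.getLast? with
      | none => none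
      | some t =>
          match modAt t (topAddr t (r - 1)) (fun u =>
            match u with
            | St.leaf _ => some (St.leaf γ)
            | St.node _ => none) with
          | none => none
          | some t' => some (St.node (l ++ [t']))
  | St.leaf _ => none

/-- `push^r_γ` on an order-`n` stack. -/
def pushOp {Γ : Type} (n r : ℕ) (γ : Γ) (s : St Γ) : Option (St Γ) :=
  modAt s (topAddr s (n - r)) (dupTop r γ)

/-- `pop^r` on an order-`n` stack. -/
def popOp {Γ : Type} (n r : ℕ) (s : St Γ) : Option (St Γ) :=
  modAt s (topAddr s (n - r)) popStk

/-- Stack operations of an order-`n` pushdown automaton. -/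
inductive Op (Γ : Type) where
  | pop (k : ℕ)
  | push (k : ℕ) (γ : Γ)

def applyOp {Γ : Type} (n : ℕ) : Op Γ → St Γ → Option (St Γ)
  | Op.pop k, s => if 1 ≤ k ∧ k ≤ n then popOp n k s else none
  | Op.push k γ, s => if 1 ≤ k ∧ k ≤ n then pushOp n k γ s else none

/-- The one-step history function on addresses: for the address of a substack of
`op(s)` it returns the address of the substack of `s` from which it originates. -/
def histStep {Γ : Type} (n : ℕ) : Op Γ → St Γ → List ℕ → List ℕ
  | Op.pop _, _, p => p
  | Op.push r _, s, p =>
      let m := n - r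
      let ta := topAddr s m
      let sz := sizeAt s ta
      if p.take (m + 1) = ta ++ [sz] then p.set m (sz - 1) else p

/-! ### Deterministic order-`n` pushdown automata -/

inductive Trans (A Γ Q : Type) where
  | read (f : A → Q)
  | op (q : Q) (o : Op Γ)

/-- A deterministic order-`n` pushdown automaton. -/
structure DPDA (n : ℕ) (A Γ : Type) where
  Q : Type
  finQ : Finite Q
  qI : Q
  γI : Γ
  F : Set Q
  δ : Q → Γ → Trans A Γ Q
  read_inj : ∀ q γ f, δ q γ = Trans.read f → Function.Injective f

/-- One step of an `n`-DPDA; the label records the letter read (if any). -/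
inductive Step {n : ℕ} {A Γ : Type} (D : DPDA n A Γ) :
    D.Q × St Γ → Option A → D.Q × St Γ → Prop where
  | read {q : D.Q} {s : St Γ} {γ : Γ} {f : A → D.Q} (a : A) :
      IsValid n s → topLeaf? n s = some γ → D.δ q γ = Trans.read f →
      Step D (q, s) (some a) (f a, s)
  | op {q : D.Q} {s s' : St Γ} {γ : Γ} {q' : D.Q} {o : Op Γ} :
      IsValid n s → topLeaf? n s = some γ → D.δ q γ = Trans.op q' o →
      applyOp n o s = some s' →
      Step D (q, s) none (q', s')

/-- A (finite) run `R(0), …, R(len)` of an `n`-DPDA. -/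
structure Run {n : ℕ} {A Γ : Type} (D : DPDA n A Γ) where
  len : ℕ
  cfg : ℕ → D.Q × St Γ
  lab : ℕ → Option A
  ok : ∀ i < len, Step D (cfg i) (lab i) (cfg (i + 1))

namespace Run

variable {n : ℕ} {A Γ : Type} {D : DPDA n A Γ}

/-- The word read by a run. -/
def word (R : Run D) : List A := (List.range R.len).filterMap R.lab

/-- The subrun `R[i,j]`. -/
def sub (R : Run D) (i j : ℕ) : Run D where
  len := min j R.len - i
  cfg := fun t => R.cfg (i + t)
  lab := fun t => R.lab (i + t)
  ok := fun t ht => R.ok (i + t) (by omega)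

/-- The history function of the single step starting at position `j` of the run. -/
def stepHist (R : Run D) (j : ℕ) : List ℕ → List ℕ :=
  match topLeaf? n (R.cfg j).2 with
  | none => id
  | some γ =>
      match D.δ (R.cfg j).1 γ with
      | Trans.read _ => id
      | Trans.op _ o => histStep n o (R.cfg j).2

/-- `histTo R i j p` : the address in `R(i)` of the origin (history) of the substack
of `R(j)` sitting at address `p` (meaningful for `i ≤ j ≤ R.len`). -/
def histTo (R : Run D) (i : ℕ) : ℕ → List ℕ → List ℕ
  | 0, p => p
  | j + 1, p => if j + 1 ≤ i then p else histTo R i j (stepHist R j p)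

/-- A run is `k`-upper when the topmost `k`-stack at its end originates from
the topmost `k`-stack at its start. -/
def IsUpper (R : Run D) (k : ℕ) : Prop :=
  histTo R 0 R.len (topAddr (R.cfg R.len).2 (n - k)) = topAddr (R.cfg 0).2 (n - k)

/-- A run is a `k`-return when the topmost `(k-1)`-stack at its end originates from the
topmost `(k-1)`-stack of `pop^k` of its starting stack, and no suffix is `(k-1)`-upper. -/
def IsReturn (R : Run D) (k : ℕ) : Prop :=
  (histTo R 0 R.len (topAddr (R.cfg R.len).2 (n - (k - 1))) =
    topAddr (R.cfg 0).2 (n - k) ++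
      [sizeAt (R.cfg 0).2 (topAddr (R.cfg 0).2 (n - k)) - 2]) ∧
  ∀ i < R.len, ¬ (R.sub i R.len).IsUpper (k - 1)

end Run

/-- `R` is the composition `S ∘ T` of the runs `S` and `T`. -/
def IsComp {n : ℕ} {A Γ : Type} {D : DPDA n A Γ} (R S T : Run D) : Prop :=
  S.cfg S.len = T.cfg 0 ∧ R.len = S.len + T.len ∧
  (∀ i ≤ S.len, R.cfg i = S.cfg i) ∧ (∀ i < S.len, R.lab i = S.lab i) ∧
  (∀ i ≤ T.len, R.cfg (S.len + i) = T.cfg i) ∧ (∀ i < T.len, R.lab (S.len + i) = T.lab i)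

/-- `Decomp R k r c` : `c 0 < c 1 < … < c r` are the cut points of the (unique)
decomposition of the `k`-upper run `R` into the maximal number of nonempty
`k`-upper runs. -/
def Decomp {n : ℕ} {A Γ : Type} {D : DPDA n A Γ} (R : Run D) (k r : ℕ) (c : ℕ → ℕ) : Prop :=
  c 0 = 0 ∧ c r = R.len ∧ (∀ j < r, c j < c (j + 1)) ∧ (∀ j ≤ r, c j ≤ R.len) ∧
  (∀ j < r, (R.sub (c j) (c (j + 1))).IsUpper k) ∧
  (∀ j < r, ∀ i, c j < i → i < c (j + 1) → ¬ (R.sub i (c (j + 1))).IsUpper k)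

/-- The image under the morphism generated by `φ` of a word. -/
def phiW {A M : Type} [Monoid M] (φ : A → M) (w : List A) : M := (w.map φ).prod

/-- The two `k`-upper runs `R` and `S` are `(k,φ)`-parallel. -/
def Parallel {n : ℕ} {A Γ M : Type} [Monoid M] {D : DPDA n A Γ}
    (φ : A → M) (R S : Run D) (k : ℕ) : Prop :=
  R.IsUpper k ∧ S.IsUpper k ∧
  topStk n (R.cfg R.len).2 k = topStk n (S.cfg S.len).2 k ∧
  ∃ (r : ℕ) (cR cS : ℕ → ℕ), Decomp R k r cR ∧ Decomp S k r cS ∧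
    ∀ j < r,
      phiW φ (R.sub (cR j) (cR (j + 1))).word = phiW φ (S.sub (cS j) (cS (j + 1))).word ∧
      topStk n (R.cfg (cR j)).2 k = topStk n (S.cfg (cS j)).2 k

/-- An infinite run of an `n`-DPDA. -/
structure InfRun {n : ℕ} {A Γ : Type} (D : DPDA n A Γ) where
  cfg : ℕ → D.Q × St Γ
  lab : ℕ → Option A
  ok : ∀ i, Step D (cfg i) (lab i) (cfg (i + 1))

/-- The finite subrun `R[i,j]` of an infinite run. -/
def InfRun.sub {n : ℕ} {A Γ : Type} {D : DPDA n A Γ} (R : InfRun D) (i j : ℕ) : Run D where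
  len := j - i
  cfg := fun t => R.cfg (i + t)
  lab := fun t => R.lab (i + t)
  ok := fun t _ => R.ok (i + t)

/-- A step label reads nothing, or reads the `star` symbol. -/
def OnlyStar {A : Type} (star : A) (o : Option A) : Prop := o = none ∨ o = some star

/-- Milestone configurations. -/
def Milestone {n : ℕ} {A Γ : Type} {D : DPDA n A Γ} (star : A) (c : D.Q × St Γ) : Prop :=
  ∃ R : InfRun D, R.cfg 0 = c ∧ (∀ i, OnlyStar star (R.lab i)) ∧
    ∃ I : Set ℕ, I.Infinite ∧ 0 ∈ I ∧ ∀ i ∈ I, ∀ j ∈ I, i ≤ j → (R.sub i j).IsUpper 0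

/-- The initial order-`n` stack, containing the single symbol `γ`. -/
def initStack (n : ℕ) {Γ : Type} (γ : Γ) : St Γ :=
  Nat.rec (motive := fun _ => St Γ) (St.leaf γ) (fun _ s => St.node [s]) n

def initCfg {n : ℕ} {A Γ : Type} (D : DPDA n A Γ) : D.Q × St Γ := (D.qI, initStack n D.γI)

/-- The language recognized by an `n`-DPDA. -/
def Lang {n : ℕ} {A Γ : Type} (D : DPDA n A Γ) : Set (List A) :=
  { w | ∃ R : Run D, R.cfg 0 = initCfg D ∧ R.word = w ∧ (R.cfg R.len).1 ∈ D.F }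

/-! ### Deterministic order-2 collapsible pushdown automata -/

/-- Stack operations of an order-2 collapsible pushdown automaton. -/
inductive COp (Γ : Type) where
  | pop1
  | pop2
  | push1 (γ : Γ)
  | push2 (γ : Γ)
  | collapse

/-- An order-2 collapsible stack: a list of 1-stacks (topmost first), each a list of
0-stacks (topmost first) storing a symbol and the collapse link (a natural number). -/
abbrev CStk (Γ : Type) := List (List (Γ × ℕ))

/-- Semantics of the order-2 collapsible stack operations. -/
def capply {Γ : Type} : COp Γ → CStk Γ → Option (CStk Γ)
  | COp.pop1, (_ :: x :: t) :: rest => some ((x :: t) :: rest)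
  | COp.pop1, _ => none
  | COp.pop2, _ :: s :: rest => some (s :: rest)
  | COp.pop2, _ => none
  | COp.push1 γ, (x :: t) :: rest => some (((γ, rest.length + 1) :: x :: t) :: rest)
  | COp.push1 _, _ => none
  | COp.push2 γ, ((x, m) :: t) :: rest => some (((γ, m) :: t) :: ((x, m) :: t) :: rest)
  | COp.push2 _, _ => none
  | COp.collapse, ((x, m) :: t) :: rest =>
      if 1 ≤ m - 1 ∧ m - 1 ≤ rest.length + 1 then
        some ((((x, m) :: t) :: rest).drop (rest.length + 1 - (m - 1)))
      else none
  | COp.collapse, _ => none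

/-- The topmost stack symbol of an order-2 collapsible stack. -/
def ctop? {Γ : Type} : CStk Γ → Option Γ
  | ((γ, _) :: _) :: _ => some γ
  | _ => none

inductive CTrans (A Γ Q : Type) where
  | read (f : A → Q)
  | op (q : Q) (o : COp Γ)

/-- A deterministic order-2 collapsible pushdown automaton. -/
structure CPDA2 (A Γ : Type) where
  Q : Type
  finQ : Finite Q
  qI : Q
  γI : Γ
  F : Set Q
  δ : Q → Γ → CTrans A Γ Q
  read_inj : ∀ q γ f, δ q γ = CTrans.read f → Function.Injective f

inductive CStep {A Γ : Type} (D : CPDA2 A Γ) :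
    D.Q × CStk Γ → Option A → D.Q × CStk Γ → Prop where
  | read {q : D.Q} {s : CStk Γ} {γ : Γ} {f : A → D.Q} (a : A) :
      ctop? s = some γ → D.δ q γ = CTrans.read f → CStep D (q, s) (some a) (f a, s)
  | op {q : D.Q} {s s' : CStk Γ} {γ : Γ} {q' : D.Q} {o : COp Γ} :
      ctop? s = some γ → D.δ q γ = CTrans.op q' o → capply o s = some s' →
      CStep D (q, s) none (q', s')

structure CRun {A Γ : Type} (D : CPDA2 A Γ) where
  len : ℕ
  cfg : ℕ → D.Q × CStk Γ
  lab : ℕ → Option A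
  ok : ∀ i < len, CStep D (cfg i) (lab i) (cfg (i + 1))

def CRun.word {A Γ : Type} {D : CPDA2 A Γ} (R : CRun D) : List A :=
  (List.range R.len).filterMap R.lab

def cinitCfg {A Γ : Type} (D : CPDA2 A Γ) : D.Q × CStk Γ := (D.qI, [[(D.γI, 1)]])

/-- The language recognized by a 2-DCPDA. -/
def CLang {A Γ : Type} (D : CPDA2 A Γ) : Set (List A) :=
  { w | ∃ R : CRun D, R.cfg 0 = cinitCfg D ∧ R.word = w ∧ (R.cfg R.len).1 ∈ D.F }

/-! ### The alphabet `{[, ], ⋆, ♯}`, the function `stars`, and the language `U` -/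

inductive Alph : Type where
  | lb    -- the opening bracket [
  | rb    -- the closing bracket ]
  | star  -- ⋆
  | sharp -- ♯
  deriving DecidableEq

instance : Fintype Alph where
  elems := {Alph.lb, Alph.rb, Alph.star, Alph.sharp}
  complete := by intro x; cases x <;> simp

/-- Processes a word over `{[, ], ⋆}`, keeping the total number of stars read so far and,
for each currently unmatched opening bracket (most recent first), the number of stars
read before it; returns `none` iff some prefix has more `]` than `[`. -/
def starsAux : List Alph → ℕ → List ℕ → Option (List ℕ)
  | [], _, st => some st
  | Alph.star :: w, cnt, st => starsAux w (cnt + 1) st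
  | Alph.lb :: w, cnt, st => starsAux w cnt (cnt :: st)
  | Alph.rb :: w, cnt, st =>
      match st with
      | [] => none
      | _ :: st' => starsAux w cnt st'
  | Alph.sharp :: _, _, _ => none

/-- `stars w` : `0` if some prefix of `w` has more closing than opening brackets, or if
`w` has equally many opening and closing brackets; otherwise the number of `⋆`s in `w`
before the last opening bracket of `w` not matched by a closing bracket. -/
def stars (w : List Alph) : ℕ :=
  match starsAux w 0 [] with
  | some (c :: _) => c
  | _ => 0

/-- The language `U = { w ♯^(stars(w)+1) | w ∈ {[, ], ⋆}* }`. -/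
def U : Set (List Alph) :=
  { u | ∃ w : List Alph, Alph.sharp ∉ w ∧ u = w ++ List.replicate (stars w + 1) Alph.sharp }

/-! ### Tree-generating pushdown systems -/

inductive TTrans (A Γ Q : Type) where
  | branch (a : A) (next : ℕ → Q)
  | op (q : Q) (o : Op Γ)

/-- A deterministic tree-generating order-`n` pushdown system (without collapse)
over the ranked alphabet `(A, rank)`. -/
structure TreePDA (n : ℕ) (A Γ : Type) (rank : A → ℕ) where
  Q : Type
  finQ : Finite Q
  qI : Q
  γI : Γ
  δ : Q → Γ → TTrans A Γ Q
  branch_inj : ∀ q γ a next, δ q γ = TTrans.branch a next →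
      ∀ i j, i < rank a → j < rank a → next i = next j → i = j

/-- One step of a tree-generating `n`-PDS; the label records the child chosen
at a branch step (if any). -/
inductive TStep {n : ℕ} {A Γ : Type} {rank : A → ℕ} (D : TreePDA n A Γ rank) :
    D.Q × St Γ → Option ℕ → D.Q × St Γ → Prop where
  | branch {q : D.Q} {s : St Γ} {γ : Γ} {a : A} {next : ℕ → D.Q} {i : ℕ} :
      IsValid n s → topLeaf? n s = some γ → D.δ q γ = TTrans.branch a next → i < rank a →
      TStep D (q, s) (some i) (next i, s)
  | op {q : D.Q} {s s' : St Γ} {γ : Γ} {q' : D.Q} {o : Op Γ} :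
      IsValid n s → topLeaf? n s = some γ → D.δ q γ = TTrans.op q' o →
      applyOp n o s = some s' →
      TStep D (q, s) none (q', s')

def TReach {n : ℕ} {A Γ : Type} {rank : A → ℕ} (D : TreePDA n A Γ rank) :
    D.Q × St Γ → D.Q × St Γ → Prop :=
  Relation.ReflTransGen (fun c c' => ∃ o, TStep D c o c')

def TOpReach {n : ℕ} {A Γ : Type} {rank : A → ℕ} (D : TreePDA n A Γ rank) :
    D.Q × St Γ → D.Q × St Γ → Prop :=
  Relation.ReflTransGen (fun c c' => TStep D c none c')

/-- `c` is a configuration at which a `branch(a,…)` transition applies. -/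
def TIsBr {n : ℕ} {A Γ : Type} {rank : A → ℕ} (D : TreePDA n A Γ rank)
    (c : D.Q × St Γ) (a : A) : Prop :=
  ∃ γ next, IsValid n c.2 ∧ topLeaf? n c.2 = some γ ∧ D.δ c.1 γ = TTrans.branch a next

/-- `TFollow D c p c'` : starting from the branch configuration `c` and following
the child choices `p` (each branch step being followed by op steps up to the next
branch configuration) one arrives at the branch configuration `c'`. -/
inductive TFollow {n : ℕ} {A Γ : Type} {rank : A → ℕ} (D : TreePDA n A Γ rank) :
    D.Q × St Γ → List ℕ → D.Q × St Γ → Prop where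
  | nil (c : D.Q × St Γ) : TFollow D c [] c
  | cons {c c₁ c₂ c₃ : D.Q × St Γ} {i : ℕ} {p : List ℕ} :
      TStep D c (some i) c₁ → TOpReach D c₁ c₂ → (∃ a, TIsBr D c₂ a) →
      TFollow D c₂ p c₃ → TFollow D c (i :: p) c₃

def tinitCfg {n : ℕ} {A Γ : Type} {rank : A → ℕ} (D : TreePDA n A Γ rank) : D.Q × St Γ :=
  (D.qI, initStack n D.γI)

/-- `D` generates the ranked tree whose labelling function is `t`
(`t p = some a` iff the node at position `p` exists and is labelled `a`). -/
def TGenerates {n : ℕ} {A Γ : Type} {rank : A → ℕ} (D : TreePDA n A Γ rank)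
    (t : List ℕ → Option A) : Prop :=
  (∀ c, TReach D (tinitCfg D) c → ∃ c' a, TReach D c c' ∧ TIsBr D c' a) ∧
  ∃ c₀, TOpReach D (tinitCfg D) c₀ ∧ (∃ a, TIsBr D c₀ a) ∧
    ∀ p a, t p = some a ↔ ∃ c, TFollow D c₀ p c ∧ TIsBr D c a

/-! ### Tree-generating order-2 collapsible pushdown systems -/

inductive CTTrans (A Γ Q : Type) where
  | branch (a : A) (next : ℕ → Q)
  | op (q : Q) (o : COp Γ)

structure CTreePDA (A Γ : Type) (rank : A → ℕ) where
  Q : Type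
  finQ : Finite Q
  qI : Q
  γI : Γ
  δ : Q → Γ → CTTrans A Γ Q
  branch_inj : ∀ q γ a next, δ q γ = CTTrans.branch a next →
      ∀ i j, i < rank a → j < rank a → next i = next j → i = j

inductive CTStep {A Γ : Type} {rank : A → ℕ} (D : CTreePDA A Γ rank) :
    D.Q × CStk Γ → Option ℕ → D.Q × CStk Γ → Prop where
  | branch {q : D.Q} {s : CStk Γ} {γ : Γ} {a : A} {next : ℕ → D.Q} {i : ℕ} :
      ctop? s = some γ → D.δ q γ = CTTrans.branch a next → i < rank a →
      CTStep D (q, s) (some i) (next i, s)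
  | op {q : D.Q} {s s' : CStk Γ} {γ : Γ} {q' : D.Q} {o : COp Γ} :
      ctop? s = some γ → D.δ q γ = CTTrans.op q' o → capply o s = some s' →
      CTStep D (q, s) none (q', s')

def CTReach {A Γ : Type} {rank : A → ℕ} (D : CTreePDA A Γ rank) :
    D.Q × CStk Γ → D.Q × CStk Γ → Prop :=
  Relation.ReflTransGen (fun c c' => ∃ o, CTStep D c o c')

def CTOpReach {A Γ : Type} {rank : A → ℕ} (D : CTreePDA A Γ rank) :
    D.Q × CStk Γ → D.Q × CStk Γ → Prop :=
  Relation.ReflTransGen (fun c c' => CTStep D c none c')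

def CTIsBr {A Γ : Type} {rank : A → ℕ} (D : CTreePDA A Γ rank)
    (c : D.Q × CStk Γ) (a : A) : Prop :=
  ∃ γ next, ctop? c.2 = some γ ∧ D.δ c.1 γ = CTTrans.branch a next

inductive CTFollow {A Γ : Type} {rank : A → ℕ} (D : CTreePDA A Γ rank) :
    D.Q × CStk Γ → List ℕ → D.Q × CStk Γ → Prop where
  | nil (c : D.Q × CStk Γ) : CTFollow D c [] c
  | cons {c c₁ c₂ c₃ : D.Q × CStk Γ} {i : ℕ} {p : List ℕ} :
      CTStep D c (some i) c₁ → CTOpReach D c₁ c₂ → (∃ a, CTIsBr D c₂ a) →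
      CTFollow D c₂ p c₃ → CTFollow D c (i :: p) c₃

def ctinitCfg {A Γ : Type} {rank : A → ℕ} (D : CTreePDA A Γ rank) : D.Q × CStk Γ :=
  (D.qI, [[(D.γI, 1)]])

/-- The order-2 collapsible pushdown system `D` generates the ranked tree whose
labelling function is `t`. -/
def CTGenerates {A Γ : Type} {rank : A → ℕ} (D : CTreePDA A Γ rank)
    (t : List ℕ → Option A) : Prop :=
  (∀ c, CTReach D (ctinitCfg D) c → ∃ c' a, CTReach D c c' ∧ CTIsBr D c' a) ∧
  ∃ c₀, CTOpReach D (ctinitCfg D) c₀ ∧ (∃ a, CTIsBr D c₀ a) ∧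
    ∀ p a, t p = some a ↔ ∃ c, CTFollow D c₀ p c ∧ CTIsBr D c a

/-!
By determinism, `R` is an initial segment of the `⋆`-run `S` witnessing that `R(0)` is a
milestone, and the run witnessing that `R(|R|)` is a milestone is the suffix of `S` from `|R|`.
So `S` comes with infinite sets `I ∋ 0` and `K ∋ |R|` of times such that `S` is `0`-upper
between any two times of `I`, and between any two times of `K`.

Suppose `S[0, |R|]` is not `0`-upper, and follow back the topmost `0`-stacks at a late time of
`I` and at a later time of `K`. Their origins never meet, as both would then come from the top of
`R(0)`. At times of `I` the first origin is the topmost `0`-stack, so its address is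
lexicographically the larger one; at times of `K` the second one's is. Stepping back in time,
`pop` keeps addresses and `push` only redirects those in the new copy to the copy it duplicates.
Hence, forward in time, the first index at which the two addresses differ never increases, and
while it stays the same so does their order. The order flips between interleaved times of `K`
and `I`, so the index would have to decrease `n` times, starting below `n`.
-/

section FirstDiff
variable {α : Type*}

def firstDiff [DecidableEq α] : List α → List α → ℕ
  | a :: p, b :: q => if a = b then firstDiff p q + 1 else 0
  | _, _ => 0

section DecidableEq
variable [DecidableEq α]

@[simp] lemma firstDiff_cons_self (a : α) (p q : List α) :
    firstDiff (a :: p) (a :: q) = firstDiff p q + 1 := by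
  simp [firstDiff]

lemma firstDiff_cons_of_ne {a b : α} (h : a ≠ b) (p q : List α) :
    firstDiff (a :: p) (b :: q) = 0 := by
  simp [firstDiff, h]

lemma firstDiff_comm : ∀ p q : List α, firstDiff p q = firstDiff q p
  | [], [] | [], _ :: _ | _ :: _, [] => rfl
  | a :: p, b :: q => by
    by_cases h : a = b
    · subst h; simp [firstDiff_comm p q]
    · rw [firstDiff_cons_of_ne h, firstDiff_cons_of_ne (Ne.symm h)]

@[simp] lemma firstDiff_self : ∀ p : List α, firstDiff p p = p.length
  | [] => rfl
  | a :: p => by simp [firstDiff_self p]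

lemma firstDiff_append_left (a p q : List α) :
    firstDiff (a ++ p) (a ++ q) = a.length + firstDiff p q := by
  induction a with
  | nil => simp
  | cons b a ih => simp [ih]; omega

lemma firstDiff_lt_length : ∀ {p q : List α}, p ≠ q → p.length = q.length →
    firstDiff p q < p.length
  | [], [], h, _ => absurd rfl h
  | a :: p, b :: q, h, hl => by
    by_cases hab : a = b
    · subst hab
      have := firstDiff_lt_length (fun hpq : p = q => h (by rw [hpq])) (by simpa using hl)
      simpa using this
    · simp [firstDiff_cons_of_ne hab]
  | [], _ :: _, _, hl | _ :: _, [], _, hl => by simp at hl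

lemma firstDiff_append_of_not_prefix : ∀ {a y : List α} (p : List α), ¬ a <+: y →
    firstDiff (a ++ p) y = firstDiff a y
  | [], y, _, h => absurd y.nil_prefix h
  | _ :: _, [], _, _ => rfl
  | b :: a, c :: y, p, h => by
    by_cases hbc : b = c
    · subst hbc
      simp [firstDiff_append_of_not_prefix p (fun h' => h ((List.prefix_cons_inj b).mpr h'))]
    · rw [List.cons_append, firstDiff_cons_of_ne hbc, firstDiff_cons_of_ne hbc]

end DecidableEq

section LinearOrder
variable [LinearOrder α]

lemma append_lt_append_left_iff (a : List α) {p q : List α} : a ++ p < a ++ q ↔ p < q := by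
  induction a with
  | nil => rfl
  | cons b a ih => simpa using ih

lemma append_lt_iff_of_not_prefix : ∀ {a y : List α} (p : List α), ¬ a <+: y →
    (a ++ p < y ↔ a < y)
  | [], y, _, h => absurd y.nil_prefix h
  | _ :: _, [], _, _ => by simp
  | b :: a, c :: y, p, h => by
    by_cases hbc : b = c
    · subst hbc
      simpa using append_lt_iff_of_not_prefix p (fun h' => h ((List.prefix_cons_inj b).mpr h'))
    · simp [List.cons_lt_cons_iff, hbc]

/-- Meant for `(x₀, y₀)` the origins of the addresses `(x, y)` some steps earlier in a run:
going back, their first difference does not move to the front, and while it stays put so does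
their order. -/
def DiffStable (x y x₀ y₀ : List α) : Prop :=
  firstDiff x y ≤ firstDiff x₀ y₀ ∧
    (firstDiff x₀ y₀ = firstDiff x y → (x₀ < y₀ ↔ x < y))

namespace DiffStable

variable {x y x₁ y₁ x₀ y₀ : List α}

lemma refl (x y : List α) : DiffStable x y x y := ⟨le_rfl, fun _ => Iff.rfl⟩

lemma trans (h₁ : DiffStable x y x₁ y₁) (h₀ : DiffStable x₁ y₁ x₀ y₀) :
    DiffStable x y x₀ y₀ :=
  ⟨h₁.1.trans h₀.1, fun h => by
    have h' : firstDiff x₁ y₁ = firstDiff x y := by have := h₀.1; have := h₁.1; omega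
    exact (h₀.2 (h.trans h'.symm)).trans (h₁.2 h')⟩

lemma symm (h : DiffStable x y x₀ y₀) (hxy : x ≠ y) (hl : x.length = y.length)
    (hl₀ : x₀.length = x.length) : DiffStable y x y₀ x₀ := by
  rw [DiffStable, firstDiff_comm y, firstDiff_comm y₀]
  refine ⟨h.1, fun hd => ?_⟩
  have hxy₀ : x₀ ≠ y₀ := by
    rintro rfl
    have := firstDiff_lt_length hxy hl
    rw [firstDiff_self] at hd
    omega
  rw [← not_iff_not, not_lt, not_lt, le_iff_lt_or_eq, le_iff_lt_or_eq, or_iff_left hxy₀,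
    or_iff_left hxy]
  exact h.2 hd

lemma firstDiff_lt (h : DiffStable x y x₀ y₀) (hflip : ¬ (x₀ < y₀ ↔ x < y)) :
    firstDiff x y < firstDiff x₀ y₀ :=
  lt_of_le_of_ne h.1 fun hd => hflip (h.2 hd.symm)

end DiffStable

/-- Each flip of the order of `X t` and `Y t` between times `i u` and `k (u + 1)` moves their
first difference to the front. -/
lemma firstDiff_add_le_of_flips {X Y : ℕ → List α} {k i : ℕ → ℕ} {N m : ℕ}
    (hstable : ∀ a b, a ≤ b → b ≤ N → DiffStable (X b) (Y b) (X a) (Y a))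
    (hki : ∀ u, k u < i u ∧ i u < k (u + 1)) (hkN : k m ≤ N)
    (hk : ∀ u ≤ m, X (k u) < Y (k u)) (hi : ∀ u < m, ¬ X (i u) < Y (i u)) :
    firstDiff (X (k m)) (Y (k m)) + m ≤ firstDiff (X (k 0)) (Y (k 0)) := by
  induction m with
  | zero => rfl
  | succ m ih =>
    have hik := (hki m).2
    have hflip := (hstable _ _ hik.le hkN).firstDiff_lt
      fun h => hi m (Nat.lt_succ_self m) (h.mpr (hk _ le_rfl))
    have hle := (hstable _ _ (hki m).1.le (hik.le.trans hkN)).1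
    have := ih ((hki m).1.le.trans (hik.le.trans hkN)) (fun u hu => hk u (by omega))
      (fun u hu => hi u (by omega))
    omega

end LinearOrder

end FirstDiff

section Redirect

/-- The history of a `push`: an address passing below `a` through the new copy, at index `L`,
comes from the copy at index `L - 1`. -/
def redirect (a : List ℕ) (L : ℕ) (p : List ℕ) : List ℕ :=
  if p.take (a.length + 1) = a ++ [L] then p.set a.length (L - 1) else p

variable {a : List ℕ} {L : ℕ}

lemma redirect_append_cons (c : ℕ) (rest : List ℕ) :
    redirect a L (a ++ c :: rest) = a ++ (if c = L then L - 1 else c) :: rest := by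
  have ht : (a ++ c :: rest).take (a.length + 1) = a ++ [c] := by simp [List.take_append]
  by_cases hc : c = L
  · subst hc; simp [redirect, ht, List.set_append_right]
  · simp [redirect, ht, hc]

lemma redirect_of_forall_ne {p : List ℕ} (h : ∀ rest, p ≠ a ++ L :: rest) :
    redirect a L p = p := by
  refine if_neg fun ht => h (p.drop (a.length + 1)) ?_
  rw [← List.take_append_drop (a.length + 1) p, ht]
  simp

lemma length_redirect (p : List ℕ) : (redirect a L p).length = p.length := by
  unfold redirect; split <;> simp

lemma diffStable_redirect_left {xs y : List ℕ} (hl : (a ++ L :: xs).length = y.length)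
    (hy : ∀ ys, y ≠ a ++ L :: ys) (hbound : ∀ c ys, y = a ++ c :: ys → c ≤ L) :
    DiffStable (a ++ L :: xs) y (a ++ (L - 1) :: xs) y := by
  by_cases hpre : a <+: y
  · obtain ⟨_ | ⟨c, ys⟩, rfl⟩ := hpre
    · simp at hl
    have hcL : c < L := (hbound c ys rfl).lt_of_ne fun h => hy ys (by rw [h])
    have hd : firstDiff (a ++ L :: xs) (a ++ c :: ys) = a.length := by
      rw [firstDiff_append_left, firstDiff_cons_of_ne (by omega)]; rfl
    by_cases hc : c = L - 1
    · -- the two origins now agree at depth `a.length`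
      subst hc
      have hd₀ : firstDiff (a ++ (L - 1) :: xs) (a ++ (L - 1) :: ys) =
          a.length + (firstDiff xs ys + 1) := by
        rw [firstDiff_append_left, firstDiff_cons_self]
      rw [DiffStable, hd, hd₀]
      exact ⟨by omega, fun h => by omega⟩
    · have hd₀ : firstDiff (a ++ (L - 1) :: xs) (a ++ c :: ys) = a.length := by
        rw [firstDiff_append_left, firstDiff_cons_of_ne (Ne.symm hc)]; rfl
      refine ⟨(hd.trans hd₀.symm).le, fun _ => ?_⟩
      simp only [append_lt_append_left_iff, List.cons_lt_cons_iff]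
      omega
  · refine ⟨(firstDiff_append_of_not_prefix _ hpre).trans
      (firstDiff_append_of_not_prefix _ hpre).symm |>.ge, fun _ => ?_⟩
    rw [append_lt_iff_of_not_prefix _ hpre, append_lt_iff_of_not_prefix _ hpre]

lemma diffStable_redirect {x y : List ℕ} (hl : x.length = y.length)
    (hx : ∀ c rest, x = a ++ c :: rest → c ≤ L)
    (hy : ∀ c rest, y = a ++ c :: rest → c ≤ L) :
    DiffStable x y (redirect a L x) (redirect a L y) := by
  by_cases hx' : ∃ xs, x = a ++ L :: xs <;> by_cases hy' : ∃ ys, y = a ++ L :: ys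
  · obtain ⟨xs, rfl⟩ := hx'
    obtain ⟨ys, rfl⟩ := hy'
    simp only [redirect_append_cons, if_pos]
    exact ⟨by simp [firstDiff_append_left], fun _ => by simp [append_lt_append_left_iff]⟩
  · obtain ⟨xs, rfl⟩ := hx'
    simp only [not_exists] at hy'
    rw [redirect_append_cons, if_pos rfl, redirect_of_forall_ne hy']
    exact diffStable_redirect_left hl hy' hy
  · obtain ⟨ys, rfl⟩ := hy'
    simp only [not_exists] at hx'
    rw [redirect_append_cons, if_pos rfl, redirect_of_forall_ne hx']
    exact (diffStable_redirect_left hl.symm hx' hx).symm (fun h => hx' ys h.symm) hl.symm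
      (by simp)
  · simp only [not_exists] at hx' hy'
    rw [redirect_of_forall_ne hx', redirect_of_forall_ne hy']
    exact DiffStable.refl x y

end Redirect

section Stacks
variable {Γ : Type}

def LeafAt (s : St Γ) (p : List ℕ) : Prop := ∃ γ, sub? s p = some (St.leaf γ)

@[simp] lemma sub?_nil (s : St Γ) : sub? s [] = some s := by cases s <;> rfl

lemma sub?_node_cons (l : List (St Γ)) (i : ℕ) (p : List ℕ) :
    sub? (St.node l) (i :: p) = l[i]?.bind (sub? · p) := by
  simp only [sub?]; cases l[i]? <;> rfl

lemma sub?_append : ∀ (s : St Γ) (p q : List ℕ), sub? s (p ++ q) = (sub? s p).bind (sub? · q)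
  | s, [], q => by simp
  | St.leaf _, _ :: _, _ => rfl
  | St.node l, i :: p, q => by
    rw [List.cons_append, sub?_node_cons, sub?_node_cons]
    cases l[i]? with
    | none => rfl
    | some t => exact sub?_append t p q

lemma leafAt_append_iff {s u : St Γ} {a : List ℕ} (h : sub? s a = some u) (r : List ℕ) :
    LeafAt s (a ++ r) ↔ LeafAt u r := by
  simp only [LeafAt, sub?_append, h, Option.bind_some]

lemma leafAt_node_cons {l : List (St Γ)} {i : ℕ} {p : List ℕ} :
    LeafAt (St.node l) (i :: p) ↔ ∃ t, l[i]? = some t ∧ LeafAt t p := by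
  simp only [LeafAt, sub?_node_cons, Option.bind_eq_some_iff]
  exact ⟨fun ⟨γ, t, ht, h⟩ => ⟨t, ht, γ, h⟩,
    fun ⟨t, ht, γ, h⟩ => ⟨γ, t, ht, h⟩⟩

lemma getElem?_length_sub_one_eq_getLastD {l : List (St Γ)} (h : l ≠ []) (d : St Γ) :
    l[l.length - 1]? = some (l.getLastD d) := by
  rw [List.getLastD_eq_getLast?, List.getLast?_eq_getElem?,
    List.getElem?_eq_getElem (by have := List.length_pos_iff.mpr h; omega)]
  rfl

namespace IsValid

lemma length_of_leafAt : ∀ {n : ℕ} {s : St Γ} {p : List ℕ}, IsValid n s → LeafAt s p →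
    p.length = n
  | 0, St.leaf _, [], _, _ => rfl
  | 0, St.leaf _, _ :: _, _, ⟨_, h⟩ => by simp [sub?] at h
  | 0, St.node _, _, hv, _ | _ + 1, St.leaf _, _, hv, _ => by simp [IsValid] at hv
  | _ + 1, St.node _, [], _, ⟨_, h⟩ => by simp at h
  | _ + 1, St.node _, _ :: _, hv, hp => by
    obtain ⟨t, ht, hp⟩ := leafAt_node_cons.mp hp
    simp [length_of_leafAt (hv.2 t (List.mem_of_getElem? ht)) hp]

lemma length_topAddr : ∀ {n d : ℕ} {s : St Γ}, IsValid n s → d ≤ n →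
    (topAddr s d).length = d
  | _, 0, s, _, _ => by cases s <;> rfl
  | 0, _ + 1, _, _, hd => by omega
  | _ + 1, _ + 1, St.leaf _, hv, _ => by simp [IsValid] at hv
  | _ + 1, d + 1, St.node l, hv, hd => by
    have hmem := List.mem_of_getElem? (getElem?_length_sub_one_eq_getLastD hv.1 (St.node []))
    simp [topAddr, length_topAddr (hv.2 _ hmem) (Nat.le_of_succ_le_succ hd),
      -List.getLastD_eq_getLast?]

lemma sub?_topAddr : ∀ {n d : ℕ} {s : St Γ}, IsValid n s → d ≤ n →
    ∃ u, sub? s (topAddr s d) = some u ∧ IsValid (n - d) u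
  | _, 0, s, hv, _ => ⟨s, by cases s <;> rfl, hv⟩
  | 0, _ + 1, _, _, hd => by omega
  | _ + 1, _ + 1, St.leaf _, hv, _ => by simp [IsValid] at hv
  | _ + 1, d + 1, St.node l, hv, hd => by
    have hget := getElem?_length_sub_one_eq_getLastD hv.1 (St.node [])
    obtain ⟨u, hu, hvu⟩ := sub?_topAddr (hv.2 _ (List.mem_of_getElem? hget))
      (Nat.le_of_succ_le_succ hd)
    exact ⟨u, by simp [topAddr, sub?_node_cons, hget, hu, -List.getLastD_eq_getLast?],
      by simpa using hvu⟩

lemma leafAt_topAddr {n : ℕ} {s : St Γ} (hv : IsValid n s) : LeafAt s (topAddr s n) := by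
  obtain ⟨u, hu, hvu⟩ := hv.sub?_topAddr le_rfl
  rw [Nat.sub_self] at hvu
  cases u with
  | leaf γ => exact ⟨γ, hu⟩
  | node l => simp [IsValid] at hvu

lemma le_topAddr : ∀ {n : ℕ} {s : St Γ} {p : List ℕ}, IsValid n s → LeafAt s p →
    p ≤ topAddr s n
  | 0, St.leaf _, [], _, _ => le_rfl
  | 0, St.leaf _, _ :: _, _, ⟨_, h⟩ => by simp [sub?] at h
  | 0, St.node _, _, hv, _ | _ + 1, St.leaf _, _, hv, _ => by simp [IsValid] at hv
  | _ + 1, St.node _, [], _, ⟨_, h⟩ => by simp at h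
  | n + 1, St.node l, i :: q, hv, hp => by
    obtain ⟨t, ht, hq⟩ := leafAt_node_cons.mp hp
    have hget := getElem?_length_sub_one_eq_getLastD hv.1 (St.node [])
    have hi : i < l.length := (List.getElem?_eq_some_iff.mp ht).1
    simp only [topAddr]
    rcases (Nat.le_sub_one_of_lt hi).lt_or_eq with hlt | rfl
    · exact (List.cons_lt_cons_iff.mpr (Or.inl hlt)).le
    · rw [hget, Option.some.injEq] at ht
      subst ht
      exact List.cons_le_cons _ (le_topAddr (hv.2 _ (List.mem_of_getElem? hget)) hq)

end IsValid

end Stacks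

section ModAt
variable {Γ : Type} {f : St Γ → Option (St Γ)}

lemma sub?_modAt_append : ∀ {p : List ℕ} {s s' : St Γ}, modAt s p f = some s' →
    ∃ u u', sub? s p = some u ∧ f u = some u' ∧ ∀ q, sub? s' (p ++ q) = sub? u' q
  | [], s, s', h => ⟨s, s', sub?_nil s, by cases s <;> exact h, fun q => rfl⟩
  | _ :: _, St.leaf _, _, h => by simp [modAt] at h
  | i :: p, St.node l, s', h => by
    simp only [modAt] at h
    cases hli : l[i]? with
    | none => simp [hli] at h
    | some t =>
      cases hm : modAt t p f with
      | none => simp [hli, hm] at h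
      | some t' =>
        simp only [hli, hm, Option.some.injEq] at h
        subst h
        obtain ⟨u, u', hu, hf, hsub⟩ := sub?_modAt_append hm
        have hset : (l.set i t')[i]? = some t' := by
          simp [(List.getElem?_eq_some_iff.mp hli).1]
        exact ⟨u, u', by simp [sub?_node_cons, hli, hu], hf, fun q => by
          simp [sub?_node_cons, hset, hsub]⟩

lemma leafAt_of_modAt_of_not_prefix : ∀ {p q : List ℕ} {s s' : St Γ}, modAt s p f = some s' →
    ¬ p <+: q → LeafAt s' q → LeafAt s q
  | [], q, _, _, _, hpq, _ => absurd q.nil_prefix hpq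
  | _ :: _, _, St.leaf _, _, h, _, _ => by simp [modAt] at h
  | i :: p, q, St.node l, s', h, hpq, hq => by
    simp only [modAt] at h
    cases hli : l[i]? with
    | none => simp [hli] at h
    | some t =>
      cases hm : modAt t p f with
      | none => simp [hli, hm] at h
      | some t' =>
        simp only [hli, hm, Option.some.injEq] at h
        subst h
        obtain _ | ⟨j, q⟩ := q
        · obtain ⟨_, hq⟩ := hq; simp at hq
        obtain ⟨u, hu, hq⟩ := leafAt_node_cons.mp hq
        refine leafAt_node_cons.mpr ?_
        by_cases hij : i = j
        · subst hij
          have hset : (l.set i t')[i]? = some t' := by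
            simp [(List.getElem?_eq_some_iff.mp hli).1]
          rw [hset, Option.some.injEq] at hu
          subst hu
          exact ⟨t, hli, leafAt_of_modAt_of_not_prefix hm
            (fun h' => hpq ((List.prefix_cons_inj i).mpr h')) hq⟩
        · rw [List.getElem?_set_ne hij] at hu
          exact ⟨u, hu, hq⟩

lemma leafAt_of_modAt (hf : ∀ u u', f u = some u' → ∀ r, LeafAt u' r → LeafAt u r)
    {p q : List ℕ} {s s' : St Γ} (h : modAt s p f = some s') (hq : LeafAt s' q) :
    LeafAt s q := by
  by_cases hpq : p <+: q
  · obtain ⟨r, rfl⟩ := hpq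
    obtain ⟨u, u', hu, hfu, hsub⟩ := sub?_modAt_append h
    exact (leafAt_append_iff hu r).mpr
      (hf u u' hfu r ((leafAt_append_iff (by simpa using hsub []) r).mp hq))
  · exact leafAt_of_modAt_of_not_prefix h hpq hq

lemma leafAt_of_popStk {u u' : St Γ} (h : popStk u = some u') {r : List ℕ}
    (hr : LeafAt u' r) : LeafAt u r := by
  cases u with
  | leaf _ => simp [popStk] at h
  | node l =>
    simp only [popStk, Option.ite_none_right_eq_some, Option.some.injEq] at h
    obtain ⟨-, rfl⟩ := h
    cases r with
    | nil => obtain ⟨_, hr⟩ := hr; simp at hr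
    | cons j r =>
      obtain ⟨t, ht, hr⟩ := leafAt_node_cons.mp hr
      rw [List.getElem?_dropLast] at ht
      split at ht
      · exact leafAt_node_cons.mpr ⟨t, ht, hr⟩
      · simp at ht

end ModAt

section Push
variable {Γ : Type}

lemma dupTop_eq_some {r : ℕ} {γ : Γ} {l : List (St Γ)} {w : St Γ}
    (h : dupTop r γ (St.node l) = some w) :
    ∃ t t', l[l.length - 1]? = some t ∧ w = St.node (l ++ [t']) ∧
      ∀ rest, LeafAt t' rest → LeafAt t rest := by
  simp only [dupTop] at h
  cases hg : l.getLast? with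
  | none => simp [hg] at h
  | some t =>
    simp only [hg] at h
    split at h
    · simp at h
    case h_2 t' hm =>
      refine ⟨t, t', List.getLast?_eq_getElem? ▸ hg, (Option.some.inj h).symm, fun _ => ?_⟩
      refine leafAt_of_modAt (fun u u' hu r hr => ?_) hm
      cases u with
      | node _ => simp at hu
      | leaf δ =>
        obtain rfl := (Option.some.inj hu).symm
        obtain _ | _ := r
        · exact ⟨δ, rfl⟩
        · obtain ⟨_, hr⟩ := hr; simp [sub?] at hr

lemma leafAt_of_modAt_dupTop {r : ℕ} {γ : Γ} {a q : List ℕ} {s s' : St Γ} {l : List (St Γ)}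
    (h : modAt s a (dupTop r γ) = some s') (hl : sub? s a = some (St.node l))
    (hq : LeafAt s' q) :
    LeafAt s (redirect a l.length q) ∧ ∀ c rest, q = a ++ c :: rest → c ≤ l.length := by
  obtain ⟨u, w, hu, hw, hsub⟩ := sub?_modAt_append h
  obtain rfl : u = St.node l := Option.some.inj (hu.symm.trans hl)
  obtain ⟨t, t', ht, rfl, ht'⟩ := dupTop_eq_some hw
  have hs' : sub? s' a = some (St.node (l ++ [t'])) := by simpa using hsub []
  by_cases hpre : a <+: q
  · obtain ⟨_ | ⟨c, rest⟩, rfl⟩ := hpre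
    · obtain ⟨_, hq⟩ := hq
      simp [hs'] at hq
    obtain ⟨v, hv, hvr⟩ := leafAt_node_cons.mp ((leafAt_append_iff hs' _).mp hq)
    have hc : c < l.length + 1 := by simpa using (List.getElem?_eq_some_iff.mp hv).1
    refine ⟨?_, fun c' rest' he => by simp at he; omega⟩
    rw [redirect_append_cons, leafAt_append_iff hl, leafAt_node_cons]
    by_cases hcl : c = l.length
    · subst hcl
      obtain rfl : v = t' := by simpa using hv.symm
      exact ⟨t, by simpa using ht, ht' rest hvr⟩
    · rw [List.getElem?_append_left (by omega)] at hv
      exact ⟨v, by simpa [hcl] using hv, hvr⟩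
  · have hne : ∀ c rest, q ≠ a ++ c :: rest := fun c rest he => hpre ⟨_, he.symm⟩
    exact ⟨by rw [redirect_of_forall_ne (hne _)]; exact leafAt_of_modAt_of_not_prefix h hpre hq,
      fun c rest he => absurd he (hne c rest)⟩

variable {n : ℕ} {s s' : St Γ}

lemma IsValid.histStep_push (hv : IsValid n s) {r : ℕ} (hr : 1 ≤ r ∧ r ≤ n) (γ : Γ) :
    ∃ l, sub? s (topAddr s (n - r)) = some (St.node l) ∧
      histStep n (Op.push r γ) s = redirect (topAddr s (n - r)) l.length := by
  obtain ⟨u, hu, hvu⟩ := hv.sub?_topAddr (Nat.sub_le n r)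
  rw [Nat.sub_sub_self hr.2] at hvu
  obtain ⟨r', rfl⟩ : ∃ r', r = r' + 1 := ⟨r - 1, by omega⟩
  cases u with
  | leaf _ => simp [IsValid] at hvu
  | node l =>
    refine ⟨l, hu, funext fun p => ?_⟩
    simp only [histStep, sizeAt, hu, redirect, hv.length_topAddr (Nat.sub_le n _)]

lemma IsValid.leafAt_histStep (hv : IsValid n s) {o : Op Γ} (h : applyOp n o s = some s')
    {q : List ℕ} (hq : LeafAt s' q) : LeafAt s (histStep n o s q) := by
  cases o with
  | pop k =>
    simp only [applyOp] at h
    split_ifs at h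
    exact leafAt_of_modAt (fun _ _ => leafAt_of_popStk) h hq
  | push r γ =>
    simp only [applyOp] at h
    split_ifs at h with hr
    obtain ⟨l, hl, hφ⟩ := hv.histStep_push hr γ
    rw [hφ]
    exact (leafAt_of_modAt_dupTop h hl hq).1

lemma IsValid.diffStable_histStep (hv : IsValid n s) {o : Op Γ} (h : applyOp n o s = some s')
    {x y : List ℕ} (hx : LeafAt s' x) (hy : LeafAt s' y) :
    DiffStable x y (histStep n o s x) (histStep n o s y) := by
  cases o with
  | pop k => exact DiffStable.refl x y
  | push r γ =>
    simp only [applyOp] at h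
    split_ifs at h with hr
    obtain ⟨l, hl, hφ⟩ := hv.histStep_push hr γ
    rw [hφ]
    obtain ⟨hx', hxb⟩ := leafAt_of_modAt_dupTop h hl hx
    obtain ⟨hy', hyb⟩ := leafAt_of_modAt_dupTop h hl hy
    have hlen := (hv.length_of_leafAt hx').trans (hv.length_of_leafAt hy').symm
    exact diffStable_redirect (by simpa only [length_redirect] using hlen) hxb hyb

end Push

section Runs
variable {n : ℕ} {A Γ : Type} {D : DPDA n A Γ}

/-- `Run.stepHist R j` is `cfgHist (R.cfg j)`. -/
def cfgHist (c : D.Q × St Γ) : List ℕ → List ℕ :=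
  match topLeaf? n c.2 with
  | none => id
  | some γ =>
    match D.δ c.1 γ with
    | Trans.read _ => id
    | Trans.op _ o => histStep n o c.2

namespace Step

variable {c c' : D.Q × St Γ} {lab : Option A}

lemma isValid (h : Step D c lab c') : IsValid n c.2 := by
  cases h <;> assumption

lemma eq_of_onlyStar {star : A} {c₁ c₂ : D.Q × St Γ} {l₁ l₂ : Option A}
    (h₁ : Step D c l₁ c₁) (h₂ : Step D c l₂ c₂)
    (hs₁ : OnlyStar star l₁) (hs₂ : OnlyStar star l₂) : c₁ = c₂ := by
  cases h₁ with
  | read a _ htop hδ =>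
    cases h₂ with
    | read a' _ htop' hδ' =>
      obtain rfl := Option.some.inj (htop.symm.trans htop')
      obtain rfl := Trans.read.inj (hδ.symm.trans hδ')
      rcases hs₁ with h | h <;> rcases hs₂ with h' | h' <;> simp_all
    | op _ htop' hδ' _ =>
      obtain rfl := Option.some.inj (htop.symm.trans htop')
      simp [hδ] at hδ'
  | op _ htop hδ happ =>
    cases h₂ with
    | read _ _ htop' hδ' =>
      obtain rfl := Option.some.inj (htop.symm.trans htop')
      simp [hδ] at hδ'
    | op _ htop' hδ' happ' =>
      obtain rfl := Option.some.inj (htop.symm.trans htop')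
      obtain ⟨rfl, rfl⟩ := Trans.op.inj (hδ.symm.trans hδ')
      rw [Option.some.inj (happ.symm.trans happ')]

lemma leafAt_cfgHist (h : Step D c lab c') {p : List ℕ} (hp : LeafAt c'.2 p) :
    LeafAt c.2 (cfgHist c p) := by
  cases h with
  | read _ _ htop hδ => simpa [cfgHist, htop, hδ] using hp
  | op hv htop hδ happ =>
    simp only [cfgHist, htop, hδ]
    exact hv.leafAt_histStep happ hp

lemma diffStable_cfgHist (h : Step D c lab c') {x y : List ℕ} (hx : LeafAt c'.2 x)
    (hy : LeafAt c'.2 y) : DiffStable x y (cfgHist c x) (cfgHist c y) := by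
  cases h with
  | read _ _ htop hδ =>
    simp only [cfgHist, htop, hδ]
    exact DiffStable.refl x y
  | op hv htop hδ happ =>
    simp only [cfgHist, htop, hδ]
    exact hv.diffStable_histStep happ hx hy

end Step

lemma cfg_eq_of_onlyStar {star : A} {c₁ c₂ : ℕ → D.Q × St Γ} {l₁ l₂ : ℕ → Option A}
    {N : ℕ}
    (h0 : c₁ 0 = c₂ 0) (h₁ : ∀ t < N, Step D (c₁ t) (l₁ t) (c₁ (t + 1)))
    (h₂ : ∀ t < N, Step D (c₂ t) (l₂ t) (c₂ (t + 1)))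
    (hs₁ : ∀ t < N, OnlyStar star (l₁ t)) (hs₂ : ∀ t < N, OnlyStar star (l₂ t)) :
    ∀ t ≤ N, c₁ t = c₂ t
  | 0, _ => h0
  | t + 1, ht => by
    have h := h₁ t ht
    rw [cfg_eq_of_onlyStar h0 h₁ h₂ hs₁ hs₂ t (by omega)] at h
    exact h.eq_of_onlyStar (h₂ t ht) (hs₁ t ht) (hs₂ t ht)

end Runs

lemma exists_interleaving {K I : Set ℕ} (hK : K.Infinite) (hI : I.Infinite) :
    ∃ k i : ℕ → ℕ, ∀ u, k u ∈ K ∧ i u ∈ I ∧ k u < i u ∧ i u < k (u + 1) := by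
  choose nI hnI using hI.exists_gt
  choose nK hnK using hK.exists_gt
  have hmem : ∀ u, (nK ∘ nI)^[u] (nK 0) ∈ K := by
    rintro (_ | u)
    · exact (hnK 0).1
    · rw [Function.iterate_succ_apply']; exact (hnK _).1
  refine ⟨fun u => (nK ∘ nI)^[u] (nK 0), fun u => nI ((nK ∘ nI)^[u] (nK 0)),
    fun u => ⟨hmem u, (hnI _).1, (hnI _).2, ?_⟩⟩
  show _ < (nK ∘ nI)^[u + 1] (nK 0)
  rw [Function.iterate_succ_apply']
  exact (hnK _).2

namespace InfRun
variable {n : ℕ} {A Γ : Type} {D : DPDA n A Γ} (S : InfRun D)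

/-- `S.hist i t p`: the address at time `i` of the origin of the substack at address `p`
at time `i + t`. -/
def hist (i : ℕ) : ℕ → List ℕ → List ℕ
  | 0, p => p
  | t + 1, p => hist i t (cfgHist (S.cfg (i + t)) p)

lemma hist_add (i a : ℕ) : ∀ b p, S.hist i (a + b) p = S.hist i a (S.hist (i + a) b p)
  | 0, _ => rfl
  | b + 1, p => by rw [← Nat.add_assoc, hist, hist_add i a b, hist, Nat.add_assoc]

lemma leafAt_hist (i : ℕ) : ∀ t {p : List ℕ}, LeafAt (S.cfg (i + t)).2 p →
    LeafAt (S.cfg i).2 (S.hist i t p)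
  | 0, _, hp => hp
  | t + 1, _, hp => leafAt_hist i t ((S.ok (i + t)).leafAt_cfgHist hp)

lemma diffStable_hist (i : ℕ) : ∀ t {x y : List ℕ}, LeafAt (S.cfg (i + t)).2 x →
    LeafAt (S.cfg (i + t)).2 y → DiffStable x y (S.hist i t x) (S.hist i t y)
  | 0, x, y, _, _ => DiffStable.refl x y
  | t + 1, _, _, hx, hy => ((S.ok (i + t)).diffStable_cfgHist hx hy).trans
      (diffStable_hist i t ((S.ok _).leafAt_cfgHist hx) ((S.ok _).leafAt_cfgHist hy))

/-- The address at time `s` of the origin of the topmost `0`-stack at time `N`. -/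
def topOrigin (N s : ℕ) : List ℕ := S.hist s (N - s) (topAddr (S.cfg N).2 n)

def IsUpperOn (i j : ℕ) : Prop := S.topOrigin j i = topAddr (S.cfg i).2 n

variable {S}

lemma topOrigin_eq_hist {N s t : ℕ} (hst : s ≤ t) (htN : t ≤ N) :
    S.topOrigin N s = S.hist s (t - s) (S.topOrigin N t) := by
  rw [topOrigin, topOrigin, show N - s = (t - s) + (N - t) by omega, hist_add,
    Nat.add_sub_cancel' hst]

lemma topOrigin_eq_of_isUpperOn {N s t : ℕ} (hst : s ≤ t) (htN : t ≤ N)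
    (h : S.IsUpperOn t N) : S.topOrigin N s = S.topOrigin t s := by
  rw [topOrigin_eq_hist hst htN, h]
  rfl

lemma leafAt_topOrigin {N s : ℕ} (hs : s ≤ N) : LeafAt (S.cfg s).2 (S.topOrigin N s) :=
  S.leafAt_hist s (N - s) (by rw [Nat.add_sub_cancel' hs]; exact (S.ok N).isValid.leafAt_topAddr)

lemma length_topOrigin {N s : ℕ} (hs : s ≤ N) : (S.topOrigin N s).length = n :=
  (S.ok s).isValid.length_of_leafAt (leafAt_topOrigin hs)

lemma diffStable_topOrigin {N N' s t : ℕ} (hst : s ≤ t) (ht : t ≤ N) (ht' : t ≤ N') :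
    DiffStable (S.topOrigin N t) (S.topOrigin N' t) (S.topOrigin N s) (S.topOrigin N' s) := by
  rw [topOrigin_eq_hist hst ht, topOrigin_eq_hist hst ht']
  apply S.diffStable_hist <;> rw [Nat.add_sub_cancel' hst]
  exacts [leafAt_topOrigin ht, leafAt_topOrigin ht']

theorem isUpperOn_zero_of_infinite {I K : Set ℕ} {m : ℕ} (hI : I.Infinite) (hK : K.Infinite)
    (hI0 : 0 ∈ I) (hm : m ∈ K) (hIup : ∀ i ∈ I, ∀ j ∈ I, i ≤ j → S.IsUpperOn i j)
    (hKup : ∀ i ∈ K, ∀ j ∈ K, i ≤ j → S.IsUpperOn i j) : S.IsUpperOn 0 m := by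
  by_contra h0m
  obtain ⟨k, i, hki⟩ := exists_interleaving hK hI
  have hk_mono : StrictMono k :=
    strictMono_nat_of_lt_succ fun u => (hki u).2.2.1.trans (hki u).2.2.2
  obtain ⟨NI, hNI, hkNI⟩ := hI.exists_gt (k n)
  obtain ⟨NK, hNK, hNK'⟩ := hK.exists_gt (max NI m)
  set X := S.topOrigin NI
  set Y := S.topOrigin NK
  have hXY : ∀ s ≤ NI, X s ≠ Y s := fun s hs h => h0m <| calc
    S.topOrigin m 0 = Y 0 :=
      (topOrigin_eq_of_isUpperOn (Nat.zero_le m) (by omega) (hKup m hm NK hNK (by omega))).symm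
    _ = X 0 := by
      show S.topOrigin NK 0 = S.topOrigin NI 0
      rw [topOrigin_eq_hist (N := NI) (Nat.zero_le s) hs,
        topOrigin_eq_hist (N := NK) (Nat.zero_le s) (by omega)]
      exact congrArg _ h.symm
    _ = _ := hIup 0 hI0 NI hNI (Nat.zero_le NI)
  have hI_ge : ∀ j ∈ I, j ≤ NI → ¬ X j < Y j := fun j hj hjN => by
    rw [not_lt, show X j = _ from hIup j hj NI hNI hjN]
    exact (S.ok j).isValid.le_topAddr (leafAt_topOrigin (by omega))
  have hK_lt : ∀ j ∈ K, j ≤ NI → X j < Y j := fun j hj hjN => by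
    refine lt_of_le_of_ne ?_ (hXY j hjN)
    rw [show Y j = _ from hKup j hj NK hNK (by omega)]
    exact (S.ok j).isValid.le_topAddr (leafAt_topOrigin hjN)
  have hk0 : k 0 ≤ NI := (hk_mono.monotone (Nat.zero_le n)).trans hkNI.le
  have hlt := firstDiff_lt_length (hXY (k 0) hk0)
    ((length_topOrigin hk0).trans (length_topOrigin (by omega)).symm)
  have := firstDiff_add_le_of_flips (X := X) (Y := Y)
    (fun a b hab hb => diffStable_topOrigin hab hb (by omega))
    (fun u => (hki u).2.2) hkNI.le
    (fun u hu => hK_lt _ (hki u).1 ((hk_mono.monotone hu).trans hkNI.le))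
    (fun u hu => hI_ge _ (hki u).2.1
      ((hki u).2.2.2.le.trans ((hk_mono.monotone hu).trans hkNI.le)))
  rw [length_topOrigin hk0] at hlt
  omega

end InfRun

section
variable {n : ℕ} {A Γ : Type} {D : DPDA n A Γ}

lemma Run.histTo_zero_eq_hist (R : Run D) (S : InfRun D) (i : ℕ)
    (hcfg : ∀ t < R.len, R.cfg t = S.cfg (i + t)) :
    ∀ t ≤ R.len, ∀ p, R.histTo 0 t p = S.hist i t p
  | 0, _, _ => rfl
  | t + 1, ht, p => by
    rw [Run.histTo, if_neg (by omega), InfRun.hist, ← hcfg t (by omega)]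
    exact R.histTo_zero_eq_hist S i hcfg t (by omega) _

lemma Run.isUpper_zero_iff (R : Run D) (S : InfRun D) (i : ℕ)
    (hcfg : ∀ t ≤ R.len, R.cfg t = S.cfg (i + t)) :
    R.IsUpper 0 ↔ S.IsUpperOn i (i + R.len) := by
  rw [Run.IsUpper, InfRun.IsUpperOn, InfRun.topOrigin, Nat.add_sub_cancel_left, Nat.sub_zero,
    R.histTo_zero_eq_hist S i (fun t ht => hcfg t ht.le) _ le_rfl, hcfg 0 (Nat.zero_le _),
    hcfg _ le_rfl, add_zero]

lemma InfRun.isUpper_sub_iff (S : InfRun D) {i j : ℕ} (hij : i ≤ j) :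
    (S.sub i j).IsUpper 0 ↔ S.IsUpperOn i j := by
  rw [Run.isUpper_zero_iff (S.sub i j) S i fun _ _ => rfl]
  simp only [InfRun.sub, Nat.add_sub_cancel' hij]

end

theorem statement17_general {n : ℕ} {A Γ : Type}
    {D : DPDA n A Γ} (star : A) (R : Run D)
    (h0 : Milestone star (R.cfg 0)) (h1 : Milestone star (R.cfg R.len))
    (hw : ∀ i < R.len, OnlyStar star (R.lab i)) :
    R.IsUpper 0 := by
  obtain ⟨S, hS0, hS, I, hI, hI0, hIup⟩ := h0
  obtain ⟨T, hT0, hT, J, hJ, hJ0, hJup⟩ := h1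
  have hRS : ∀ t ≤ R.len, R.cfg t = S.cfg t :=
    cfg_eq_of_onlyStar hS0.symm R.ok (fun t _ => S.ok t) hw (fun t _ => hS t)
  have hTS : ∀ t, T.cfg t = S.cfg (R.len + t) := fun t =>
    cfg_eq_of_onlyStar (hT0.trans (hRS _ le_rfl)) (fun t _ => T.ok t)
      (fun t _ => S.ok (R.len + t)) (fun t _ => hT t) (fun t _ => hS _) t le_rfl
  rw [R.isUpper_zero_iff S 0 fun t ht => by rw [zero_add]; exact hRS t ht, zero_add]
  refine S.isUpperOn_zero_of_infinite hI (hJ.image (add_right_injective R.len).injOn) hI0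
    ⟨0, hJ0, add_zero _⟩ (fun i hi j hj hij => (S.isUpper_sub_iff hij).mp (hIup i hi j hj hij))
    ?_
  rintro _ ⟨j, hj, rfl⟩ _ ⟨j', hj', rfl⟩ hjj'
  simp only [add_le_add_iff_left] at hjj'
  have := ((T.sub j j').isUpper_zero_iff S (R.len + j) fun t _ => by
    simp only [InfRun.sub, hTS, Nat.add_assoc]).mp (hJup j hj j' hj' (by omega))
  simpa [InfRun.sub, Nat.add_assoc, Nat.add_sub_cancel' (by omega : j ≤ j')] using this

/-- Let `D` be an `n`-DPDA whose input alphabet contains a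
distinguished symbol `⋆`, and let `R` be a run of `D` between two milestone
configurations.  If `R` reads only `⋆` symbols, then `R` is 0-upper. -/
theorem statement17 {n : ℕ} (hn : 1 ≤ n) {A Γ : Type} [Finite A] [Finite Γ]
    {D : DPDA n A Γ} (star : A) (R : Run D)
    (h0 : Milestone star (R.cfg 0)) (h1 : Milestone star (R.cfg R.len))
    (hw : ∀ i < R.len, OnlyStar star (R.lab i)) :
    R.IsUpper 0 :=
  statement17_general star R h0 h1 hw

end HOPDA
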